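/- Let 0 < θ ≤ 1, let μ be a compactly supported Borel probability measure on ℝ^d, and assume 𝒥_{u,θ}(μ) < ∞ for some u > 0. Then: (1) if 0 < η ≤ θ, then 𝒥_{w,η}(μ) < ∞ for every 0 < w ≤ (η/θ)·u; and (2) if θ < η ≤ 1, then 𝒥_{w,η}(μ) < ∞ for every 0 < w < u. -/

import Mathlib

open MeasureTheory Real ENNReal

noncomputable section

/-- Fourier transform of a measure on a real inner product space,
`μ̂(ξ) = ∫ e^{-2πi x·ξ} dμ(x)`. -/
def ftm {H : Type*} [NormedAddCommGroup H] [InnerProductSpace ℝ H] [MeasurableSpace H]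
    (μ : Measure H) (ξ : H) : ℂ :=
  ∫ x, Complex.exp (-(2 * Real.pi * (inner ℝ x ξ : ℝ)) * Complex.I) ∂μ

/-- Fourier transform of a function on ℝᵈ, `f̂(ξ) = ∫ f(x) e^{-2πi x·ξ} dx`. -/
def ftf {d : ℕ} (f : EuclideanSpace ℝ (Fin d) → ℂ) (ξ : EuclideanSpace ℝ (Fin d)) : ℂ :=
  ∫ x, f x * Complex.exp (-(2 * Real.pi * (inner ℝ x ξ : ℝ)) * Complex.I)

/-- The topological support of a measure. -/
def msupp {X : Type*} [TopologicalSpace X] [MeasurableSpace X] (μ : Measure X) : Set X :=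
  {x | ∀ U ∈ nhds x, μ U ≠ 0}

/-- The (s,θ)-energy 𝒥_{s,θ}(μ) of a measure on ℝᵈ. -/
def Jen {d : ℕ} (μ : Measure (EuclideanSpace ℝ (Fin d))) (s θ : ℝ) : ℝ≥0∞ :=
  if θ = 0 then ⨆ z : EuclideanSpace ℝ (Fin d), ENNReal.ofReal (‖ftm μ z‖ ^ 2 * ‖z‖ ^ s)
  else (∫⁻ z : EuclideanSpace ℝ (Fin d),
      ENNReal.ofReal (‖ftm μ z‖ ^ (2 / θ) * ‖z‖ ^ (s / θ - d))) ^ θ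

/-- The Fourier spectrum `dim_F^θ μ` of a measure. -/
def dimFs {d : ℕ} (μ : Measure (EuclideanSpace ℝ (Fin d))) (θ : ℝ) : ℝ :=
  sSup {s : ℝ | 0 ≤ s ∧ Jen μ s θ < ⊤}

/-- The Fourier spectrum `dim_F^θ E` of a set. -/
def dimFsSet {d : ℕ} (E : Set (EuclideanSpace ℝ (Fin d))) (θ : ℝ) : ℝ :=
  sSup {r : ℝ | ∃ μ : Measure (EuclideanSpace ℝ (Fin d)),
    IsFiniteMeasure μ ∧ μ ≠ 0 ∧ msupp μ ⊆ E ∧ r = min (dimFs μ θ) d}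

/-- The s-energy I_s(μ). -/
def Ien {d : ℕ} (μ : Measure (EuclideanSpace ℝ (Fin d))) (s : ℝ) : ℝ≥0∞ :=
  ∫⁻ x, ∫⁻ y, edist x y ^ (-s) ∂μ ∂μ

/-- Distance set between two sets. -/
def distSet {d : ℕ} (E F : Set (EuclideanSpace ℝ (Fin d))) : Set ℝ :=
  {r | ∃ x ∈ E, ∃ y ∈ F, r = dist x y}

/-- Pinned distance set. -/
def pinDistSet {d : ℕ} (x : EuclideanSpace ℝ (Fin d)) (E : Set (EuclideanSpace ℝ (Fin d))) :
    Set ℝ :=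
  (fun y => dist x y) '' E

/-- Append a real coordinate to a vector in ℝᵈ, giving a vector in ℝ^{d+1}. -/
def snocE {d : ℕ} (y : EuclideanSpace ℝ (Fin d)) (t : ℝ) : EuclideanSpace ℝ (Fin (d + 1)) :=
  (EuclideanSpace.equiv (Fin (d + 1)) ℝ).symm (Fin.snoc (fun i => y i) t)

/-- The lift map F(y) = (y, |y|²) from ℝᵈ to ℝ^{d+1}. -/
def liftMap {d : ℕ} (y : EuclideanSpace ℝ (Fin d)) : EuclideanSpace ℝ (Fin (d + 1)) :=
  snocE y (‖y‖ ^ 2)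

/-- The frequency vector τ(−2x, 1) ∈ ℝ^{d+1}. -/
def freqVec {d : ℕ} (τ : ℝ) (x : EuclideanSpace ℝ (Fin d)) : EuclideanSpace ℝ (Fin (d + 1)) :=
  τ • snocE ((-2 : ℝ) • x) 1

/-!
Split the frequency integral at `‖z‖ = 1`. Near the origin `‖μ̂‖ ≤ 1` and the weight
`‖z‖ ^ (w / η - d)` is integrable because `w > 0`. Away from the origin, for `η ≤ θ` the
integrand is dominated pointwise by that of `𝒥_{u,θ}(μ)` (as `‖μ̂‖ ≤ 1 ≤ ‖z‖`), while for
`θ < η` Hölder's inequality with exponents `η / θ` and `η / (η - θ)` bounds it by the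
`𝒥_{u,θ}(μ)` integral times that of `‖z‖ ^ ((w - u) / (η - θ) - d)`, finite since `w < u`.
-/

section FourierTransform

variable {H : Type*} [NormedAddCommGroup H] [InnerProductSpace ℝ H] [MeasurableSpace H]

lemma ftm_eq_charFun (μ : Measure H) (ξ : H) : ftm μ ξ = charFun μ (-(2 * π) • ξ) := by
  simp only [ftm, charFun_apply, inner_smul_right]
  congr with x
  congr 1
  push_cast
  ring

lemma norm_ftm_le_one (μ : Measure H) [IsProbabilityMeasure μ] (ξ : H) : ‖ftm μ ξ‖ ≤ 1 := by
  rw [ftm_eq_charFun]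
  exact norm_charFun_le_one _

lemma continuous_ftm [BorelSpace H] [SecondCountableTopology H] (μ : Measure H)
    [IsFiniteMeasure μ] : Continuous (ftm μ) := by
  simp_rw [funext (ftm_eq_charFun μ)]
  fun_prop

end FourierTransform

section PowerIntegrability

open Metric Module

variable {E : Type*} [NormedAddCommGroup E] [NormedSpace ℝ E] [FiniteDimensional ℝ E]
  [MeasurableSpace E] [BorelSpace E] {μ : Measure E} [μ.IsAddHaarMeasure]

lemma lintegral_ball_norm_rpow_lt_top {a : ℝ} (ha : -(finrank ℝ E : ℝ) < a) :
    ∫⁻ x in ball 0 1, ENNReal.ofReal (‖x‖ ^ a) ∂μ < ⊤ := by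
  rcases le_or_gt 0 a with ha0 | ha0
  · refine setLIntegral_lt_top_of_le_nnreal measure_ball_lt_top.ne ⟨1, fun x hx => ?_⟩
    rw [mem_ball_zero_iff] at hx
    simpa using rpow_le_one (norm_nonneg x) hx.le ha0
  · have hdim : 1 ≤ finrank ℝ E := by
      by_contra! h
      simp only [Nat.lt_one_iff.mp h, CharP.cast_eq_zero, neg_zero] at ha
      linarith
    refine IntegrableOn.setLIntegral_lt_top (integrableOn_ball_of_norm_le_rpow (C := 1)
      (α := -a) hdim (by linarith) (ae_of_all _ fun x => ?_)
      (measurable_norm.pow_const a).aestronglyMeasurable)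
    simp [abs_of_nonneg (rpow_nonneg (norm_nonneg x) a)]

lemma lintegral_compl_ball_norm_rpow_lt_top {b : ℝ} (hb : b < -(finrank ℝ E : ℝ)) :
    ∫⁻ x in (ball 0 1)ᶜ, ENNReal.ofReal (‖x‖ ^ b) ∂μ < ⊤ := by
  have hb0 : b < 0 := hb.trans_le (neg_nonpos.mpr (Nat.cast_nonneg _))
  have hdom : Integrable (fun x : E => 2 ^ (-b) * (1 + ‖x‖) ^ (-(-b))) μ :=
    (integrable_one_add_norm (by linarith)).const_mul _
  refine IntegrableOn.setLIntegral_lt_top (hdom.integrableOn.mono'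
    (measurable_norm.pow_const b).aestronglyMeasurable
    (ae_restrict_of_forall_mem measurableSet_ball.compl fun x hx => ?_))
  rw [Set.mem_compl_iff, mem_ball_zero_iff, not_lt] at hx
  -- `1 + ‖x‖ ≤ 2 ‖x‖` away from the unit ball
  calc ‖‖x‖ ^ b‖ = 2 ^ (-b) * (2 * ‖x‖) ^ b := by
        rw [Real.norm_of_nonneg (by positivity), mul_rpow zero_le_two (norm_nonneg x),
          ← mul_assoc, ← rpow_add zero_lt_two, neg_add_cancel, Real.rpow_zero, one_mul]
    _ ≤ 2 ^ (-b) * (1 + ‖x‖) ^ (-(-b)) := by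
        rw [neg_neg]
        gcongr ?_ * ?_
        exact rpow_le_rpow_of_nonpos (by positivity) (by linarith) hb0.le

end PowerIntegrability

lemma lintegral_rpow_inv_mul_lt_top {α : Type*} [MeasurableSpace α] {ν : Measure α} {p q : ℝ}
    (hpq : p.HolderConjugate q) {f g : α → ℝ≥0∞} (hf : AEMeasurable f ν) (hg : AEMeasurable g ν)
    (hf_int : ∫⁻ a, f a ∂ν < ⊤) (hg_int : ∫⁻ a, g a ^ q ∂ν < ⊤) :
    ∫⁻ a, f a ^ p⁻¹ * g a ∂ν < ⊤ := by
  have holder := ENNReal.lintegral_mul_le_Lp_mul_Lq ν hpq (hf.pow_const p⁻¹) hg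
  simp_rw [← ENNReal.rpow_mul, inv_mul_cancel₀ hpq.ne_zero, ENNReal.rpow_one] at holder
  exact holder.trans_lt (ENNReal.mul_lt_top
    (ENNReal.rpow_lt_top_of_nonneg (one_div_pos.2 hpq.pos).le hf_int.ne)
    (ENNReal.rpow_lt_top_of_nonneg (one_div_pos.2 hpq.symm.pos).le hg_int.ne))

section Energy

open Metric

variable {d : ℕ} (μ : Measure (EuclideanSpace ℝ (Fin d))) {s θ u w η : ℝ}

def energyDensity (s θ : ℝ) (z : EuclideanSpace ℝ (Fin d)) : ℝ≥0∞ :=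
  ENNReal.ofReal (‖ftm μ z‖ ^ (2 / θ) * ‖z‖ ^ (s / θ - d))

lemma Jen_lt_top_iff (hθ : 0 < θ) : Jen μ s θ < ⊤ ↔ ∫⁻ z, energyDensity μ s θ z < ⊤ := by
  rw [Jen, if_neg hθ.ne', ENNReal.rpow_lt_top_iff_of_pos hθ]
  rfl

lemma measurable_energyDensity [IsFiniteMeasure μ] : Measurable (energyDensity μ s θ) := by
  have := (continuous_ftm μ).measurable
  unfold energyDensity
  fun_prop

lemma lintegral_ball_energyDensity_lt_top [IsProbabilityMeasure μ] (hs : 0 < s) (hθ : 0 < θ) :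
    ∫⁻ z in ball 0 1, energyDensity μ s θ z < ⊤ := by
  refine lt_of_le_of_lt (lintegral_mono fun z => ENNReal.ofReal_le_ofReal ?_)
    (lintegral_ball_norm_rpow_lt_top (a := s / θ - d)
      (by rw [finrank_euclideanSpace_fin]; linarith [div_pos hs hθ]))
  exact mul_le_of_le_one_left (rpow_nonneg (norm_nonneg z) _)
    (rpow_le_one (norm_nonneg _) (norm_ftm_le_one μ z) (div_nonneg zero_le_two hθ.le))

lemma Jen_lt_top_of_lintegral_compl_ball_lt_top [IsProbabilityMeasure μ] (hs : 0 < s)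
    (hθ : 0 < θ) (h : ∫⁻ z in (ball 0 1)ᶜ, energyDensity μ s θ z < ⊤) : Jen μ s θ < ⊤ := by
  rw [Jen_lt_top_iff μ hθ, ← lintegral_add_compl _ measurableSet_ball]
  exact ENNReal.add_lt_top.2 ⟨lintegral_ball_energyDensity_lt_top μ hs hθ, h⟩

lemma energyDensity_le_of_one_le_norm [IsProbabilityMeasure μ] (hη : 0 < η) (hηθ : η ≤ θ)
    (hwu : w / η ≤ u / θ) {z : EuclideanSpace ℝ (Fin d)} (hz : 1 ≤ ‖z‖) :
    energyDensity μ w η z ≤ energyDensity μ u θ z := by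
  refine ENNReal.ofReal_le_ofReal ?_
  gcongr ?_ * ?_
  · exact rpow_le_rpow_of_exponent_ge' (norm_nonneg _) (norm_ftm_le_one μ z)
      (div_nonneg zero_le_two (hη.trans_le hηθ).le) (by gcongr)
  · exact rpow_le_rpow_of_exponent_le hz (by linarith)

lemma energyDensity_eq_rpow_mul (hθ : 0 < θ) (hη : 0 < η) {z : EuclideanSpace ℝ (Fin d)}
    (hz : z ≠ 0) :
    energyDensity μ w η z = energyDensity μ u θ z ^ (η / θ)⁻¹ *
      ENNReal.ofReal (‖z‖ ^ ((w - u) / η - d * (η - θ) / η)) := by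
  have hreal : ‖ftm μ z‖ ^ (2 / η) * ‖z‖ ^ (w / η - d) =
      (‖ftm μ z‖ ^ (2 / θ) * ‖z‖ ^ (u / θ - d)) ^ (η / θ)⁻¹ *
        ‖z‖ ^ ((w - u) / η - d * (η - θ) / η) := by
    rw [mul_rpow (by positivity) (by positivity), ← rpow_mul (norm_nonneg _),
      ← rpow_mul (norm_nonneg _), mul_assoc, ← rpow_add (norm_pos_iff.2 hz)]
    congr 2
    · field_simp
    · field_simp
      ring
  simp only [energyDensity]
  rw [hreal, ENNReal.ofReal_mul (by positivity),
    ENNReal.ofReal_rpow_of_nonneg (by positivity) (by positivity)]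

lemma Jen_lt_top_of_le_of_div_le [IsProbabilityMeasure μ] (hη : 0 < η) (hηθ : η ≤ θ)
    (hw : 0 < w) (hwu : w / η ≤ u / θ) (hJ : Jen μ u θ < ⊤) : Jen μ w η < ⊤ := by
  rw [Jen_lt_top_iff μ (hη.trans_le hηθ)] at hJ
  refine Jen_lt_top_of_lintegral_compl_ball_lt_top μ hw hη ?_
  refine lt_of_le_of_lt (setLIntegral_mono' measurableSet_ball.compl fun z hz => ?_)
    ((setLIntegral_le_lintegral _ _).trans_lt hJ)
  rw [Set.mem_compl_iff, mem_ball_zero_iff, not_lt] at hz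
  exact energyDensity_le_of_one_le_norm μ hη hηθ hwu hz

lemma Jen_lt_top_of_lt_of_lt [IsProbabilityMeasure μ] (hθ : 0 < θ) (hθη : θ < η) (hw : 0 < w)
    (hwu : w < u) (hJ : Jen μ u θ < ⊤) : Jen μ w η < ⊤ := by
  have hη := hθ.trans hθη
  have hηθ : 0 < η - θ := by linarith
  rw [Jen_lt_top_iff μ hθ] at hJ
  refine Jen_lt_top_of_lintegral_compl_ball_lt_top μ hw hη ?_
  have hpq : (η / θ).HolderConjugate (η / (η - θ)) := by
    rw [Real.holderConjugate_iff]
    exact ⟨(one_lt_div hθ).2 hθη, by field_simp; ring⟩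
  have hweight : ∀ z : EuclideanSpace ℝ (Fin d),
      ENNReal.ofReal (‖z‖ ^ ((w - u) / η - d * (η - θ) / η)) ^ (η / (η - θ)) =
        ENNReal.ofReal (‖z‖ ^ ((w - u) / (η - θ) - d)) := by
    intro z
    rw [ENNReal.ofReal_rpow_of_nonneg (by positivity) (by positivity), ← rpow_mul (norm_nonneg _)]
    congr 3
    field_simp
  rw [setLIntegral_congr_fun measurableSet_ball.compl fun z hz =>
    energyDensity_eq_rpow_mul μ hθ hη (ne_of_mem_of_not_mem hz (by simp))]
  refine lintegral_rpow_inv_mul_lt_top hpq (measurable_energyDensity μ).aemeasurable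
    (by fun_prop) ((setLIntegral_le_lintegral _ _).trans_lt hJ) ?_
  simp_rw [hweight]
  refine lintegral_compl_ball_norm_rpow_lt_top ?_
  rw [finrank_euclideanSpace_fin]
  linarith [div_neg_of_neg_of_pos (sub_neg.2 hwu) hηθ]

end Energy

theorem stmt18_general (d : ℕ) (θ : ℝ) (hθ : 0 < θ)
    (μ : Measure (EuclideanSpace ℝ (Fin d))) [IsProbabilityMeasure μ]
    (u : ℝ) (hJ : Jen μ u θ < ⊤) :
    (∀ η : ℝ, 0 < η → η ≤ θ →
      ∀ w : ℝ, 0 < w → w ≤ (η / θ) * u → Jen μ w η < ⊤) ∧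
    (∀ η : ℝ, θ < η → η ≤ 1 →
      ∀ w : ℝ, 0 < w → w < u → Jen μ w η < ⊤) := by
  refine ⟨fun η hη hηθ w hw hwu => ?_,
    fun η hθη _ w hw hwu => Jen_lt_top_of_lt_of_lt μ hθ hθη hw hwu hJ⟩
  refine Jen_lt_top_of_le_of_div_le μ hη hηθ hw ?_ hJ
  rw [div_le_div_iff₀ hη hθ]
  calc w * θ ≤ η / θ * u * θ := by gcongr
    _ = u * η := by field_simp

/-- Lemma 5.7: monotonicity properties of the (s,θ)-energies. -/
theorem stmt18 (d : ℕ) (θ : ℝ) (hθ : 0 < θ) (hθ1 : θ ≤ 1)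
    (μ : Measure (EuclideanSpace ℝ (Fin d))) [IsProbabilityMeasure μ]
    (hc : IsCompact (msupp μ))
    (u : ℝ) (hu : 0 < u) (hJ : Jen μ u θ < ⊤) :
    (∀ η : ℝ, 0 < η → η ≤ θ →
      ∀ w : ℝ, 0 < w → w ≤ (η / θ) * u → Jen μ w η < ⊤) ∧
    (∀ η : ℝ, θ < η → η ≤ 1 →
      ∀ w : ℝ, 0 < w → w < u → Jen μ w η < ⊤) :=
  stmt18_general d θ hθ μ u hJ

end
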